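/- arXiv:2105.04238 — 8 statements merged into one kernel-verified Lean document; each statement's English description precedes it below -/
import Mathlib

section
/- Let c, x1, x2, x3, y, z be complex numbers with y ≠ 0, z ≠ 0, x1*x2 + x3*z + 1 ≠ 0 and x1*x3 + x2*z + 1 ≠ 0, and set ỹ = ((x1*x2 + x3*z + 1)/(x1*x3 + x2*z + 1)) * y. Then K(x1, x2, y) * K(y, x3, z) = K(x1, x3, ỹ) * K(ỹ, x2, z) * ((x1*x2 + x3*z + 1)/(x1*x3 + x2*z + 1)), where K(a, b, w) = exp(c*(a*b*w + w))/w. (The last factor is dỹ/dy, so K(x1,x2,y)K(y,x3,z) dy = K(x1,x3,ỹ)K(ỹ,x2,z) dỹ.) -/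
/-- The multiplication kernel of Example 2.2.1: `K(a,b,w) = exp(c(abw + w))/w`. -/
noncomputable def kernEx221 (c a b w : ℂ) : ℂ := Complex.exp (c * (a * b * w + w)) / w

theorem kernEx221_mul_kernEx221 (c a b b' w z : ℂ) :
    kernEx221 c a b w * kernEx221 c w b' z =
      Complex.exp (c * ((a * b + b' * z + 1) * w + z)) / (w * z) := by
  rw [kernEx221, kernEx221, div_mul_div_comm, ← Complex.exp_add]
  ring_nf

theorem ex221_associativity_general (c x1 x2 x3 y z : ℂ)
    (h1 : x1 * x2 + x3 * z + 1 ≠ 0) (h2 : x1 * x3 + x2 * z + 1 ≠ 0) :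
    kernEx221 c x1 x2 y * kernEx221 c y x3 z =
      kernEx221 c x1 x3 ((x1 * x2 + x3 * z + 1) / (x1 * x3 + x2 * z + 1) * y) *
        kernEx221 c ((x1 * x2 + x3 * z + 1) / (x1 * x3 + x2 * z + 1) * y) x2 z *
        ((x1 * x2 + x3 * z + 1) / (x1 * x3 + x2 * z + 1)) := by
  set r := (x1 * x2 + x3 * z + 1) / (x1 * x3 + x2 * z + 1)
  have hr : r ≠ 0 := div_ne_zero h1 h2
  -- this makes the two exponents agree; the Jacobian `r` then cancels the `r` in `ỹ = r * y`
  have hexp : (x1 * x3 + x2 * z + 1) * (r * y) = (x1 * x2 + x3 * z + 1) * y := by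
    rw [← mul_assoc, mul_div_cancel₀ _ h2]
  rw [kernEx221_mul_kernEx221, kernEx221_mul_kernEx221, hexp, mul_assoc r y z, mul_comm r,
    div_mul_eq_mul_div, mul_div_mul_right _ _ hr]

theorem ex221_associativity (c x1 x2 x3 y z : ℂ)
    (hy : y ≠ 0) (hz : z ≠ 0)
    (h1 : x1 * x2 + x3 * z + 1 ≠ 0) (h2 : x1 * x3 + x2 * z + 1 ≠ 0) :
    kernEx221 c x1 x2 y * kernEx221 c y x3 z =
      kernEx221 c x1 x3 ((x1 * x2 + x3 * z + 1) / (x1 * x3 + x2 * z + 1) * y) *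
        kernEx221 c ((x1 * x2 + x3 * z + 1) / (x1 * x3 + x2 * z + 1) * y) x2 z *
        ((x1 * x2 + x3 * z + 1) / (x1 * x3 + x2 * z + 1)) :=
  ex221_associativity_general c x1 x2 x3 y z h1 h2
end

section
/- Let c, x1, x2, x3, y, z be complex numbers with x1, x2, x3, y, z all nonzero and x1*x3 + x2*z ≠ 0, x1*x2 + x3*z ≠ 0, and set ỹ = ((x1*x2 + x3*z)/(x1*x3 + x2*z)) * y. Then K(x1, x2, y) * K(y, x3, z) = K(x1, x3, ỹ) * K(ỹ, x2, z) * ((x1*x2 + x3*z)/(x1*x3 + x2*z)), where K(a, b, w) = exp(c*(a*b*w + a/(b*w) + b/(a*w) + w/(a*b)))/w. -/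
/-!
Write `K(a,b,w) = exp(c φ(a,b,w))/w` with `φ(a,b,w) = abw + a/(bw) + b/(aw) + w/(ab)`.
With `A = x1x2 + x3z`, `B = x1x3 + x2z`, `P = x1x2x3z` and `Q = x1z + x2x3`, the exponent
`φ(x1,x2,y) + φ(y,x3,z)` regroups as `A·y·(1 + 1/P) + (B/y)·(Q/P)`. Exchanging `x2` and `x3`
swaps `A` and `B` and fixes `P` and `Q`, so `φ(x1,x3,ỹ) + φ(ỹ,x2,z)` is the same expression
with `(y, A, B)` replaced by `(ỹ, B, A)`; since `ỹ = (A/B)·y`, both terms agree. What remains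
is the prefactor `1/(ỹz) = (B/A)·1/(yz)`.
-/

/-- The multiplication kernel of Example 2.2.2:
`K(a,b,w) = exp(c(abw + a/(bw) + b/(aw) + w/(ab)))/w`. -/
noncomputable def kernEx222 (c a b w : ℂ) : ℂ :=
  Complex.exp (c * (a * b * w + a / (b * w) + b / (a * w) + w / (a * b))) / w

open Complex

noncomputable def phaseEx222 (a b w : ℂ) : ℂ :=
  a * b * w + a / (b * w) + b / (a * w) + w / (a * b)

theorem kernEx222_eq_exp (c a b w : ℂ) :
    kernEx222 c a b w = exp (c * phaseEx222 a b w) / w :=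
  rfl

theorem kernEx222_mul_kernEx222 (c a b w a' b' w' : ℂ) :
    kernEx222 c a b w * kernEx222 c a' b' w' =
      exp (c * (phaseEx222 a b w + phaseEx222 a' b' w')) / (w * w') := by
  rw [kernEx222_eq_exp, kernEx222_eq_exp, div_mul_div_comm, ← exp_add, mul_add]

theorem phaseEx222_add_phaseEx222 {x1 x2 x3 y z : ℂ}
    (hx1 : x1 ≠ 0) (hx2 : x2 ≠ 0) (hx3 : x3 ≠ 0) (hy : y ≠ 0) (hz : z ≠ 0) :
    phaseEx222 x1 x2 y + phaseEx222 y x3 z =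
      (x1 * x2 + x3 * z) * y * (1 + 1 / (x1 * x2 * x3 * z)) +
        (x1 * x3 + x2 * z) / y * ((x1 * z + x2 * x3) / (x1 * x2 * x3 * z)) := by
  unfold phaseEx222
  field_simp
  ring

theorem ex222_associativity (c x1 x2 x3 y z : ℂ)
    (hx1 : x1 ≠ 0) (hx2 : x2 ≠ 0) (hx3 : x3 ≠ 0) (hy : y ≠ 0) (hz : z ≠ 0)
    (h1 : x1 * x3 + x2 * z ≠ 0) (h2 : x1 * x2 + x3 * z ≠ 0) :
    kernEx222 c x1 x2 y * kernEx222 c y x3 z =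
      kernEx222 c x1 x3 ((x1 * x2 + x3 * z) / (x1 * x3 + x2 * z) * y) *
        kernEx222 c ((x1 * x2 + x3 * z) / (x1 * x3 + x2 * z) * y) x2 z *
        ((x1 * x2 + x3 * z) / (x1 * x3 + x2 * z)) := by
  set r := (x1 * x2 + x3 * z) / (x1 * x3 + x2 * z) with hr
  have hry : r * y ≠ 0 := mul_ne_zero (div_ne_zero h2 h1) hy
  have phase_eq : phaseEx222 x1 x2 y + phaseEx222 y x3 z =
      phaseEx222 x1 x3 (r * y) + phaseEx222 (r * y) x2 z := by
    rw [phaseEx222_add_phaseEx222 hx1 hx2 hx3 hy hz,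
      phaseEx222_add_phaseEx222 hx1 hx3 hx2 hry hz, hr]
    field_simp
  rw [kernEx222_mul_kernEx222, kernEx222_mul_kernEx222, phase_eq, hr]
  field_simp
end

section
/- Let c, x1, x2, x3, x4, x5, y, z be complex numbers with y ≠ 0, z ≠ 0, x1*x2*x3 + x4*x5*z + 1 ≠ 0 and x1*x2*x4 + x3*x5*z + 1 ≠ 0, and set ỹ = ((x1*x2*x3 + x4*x5*z + 1)/(x1*x2*x4 + x3*x5*z + 1)) * y. Then K(x1, x2, x3, y) * K(y, x4, x5, z) = K(x1, x2, x4, ỹ) * K(ỹ, x3, x5, z) * ((x1*x2*x3 + x4*x5*z + 1)/(x1*x2*x4 + x3*x5*z + 1)), where K(a, b, d, w) = exp(c*(a*b*d*w + w))/w. -/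
/-- The three-input kernel of Example 2.5.1: `K(a,b,d,w) = exp(c(abdw + w))/w`. -/
noncomputable def kernEx251 (c a b d w : ℂ) : ℂ := Complex.exp (c * (a * b * d * w + w)) / w

/-! Both sides are `exp (c (y A + z)) / (y z)` with `A = x1 x2 x3 + x4 x5 z + 1`: the composite
`K(a,b,d,w) K(w,e,f,z)` depends on the middle variable only through `w (abd + efz + 1)`, and
`ỹ (x1 x2 x4 + x3 x5 z + 1) = y A`, while the factor `ỹ / y` cancels the change of the denominator. -/

theorem kernEx251_mul_kernEx251 (c a b d w e f z : ℂ) :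
    kernEx251 c a b d w * kernEx251 c w e f z =
      Complex.exp (c * (w * (a * b * d + e * f * z + 1) + z)) / (w * z) := by
  rw [kernEx251, kernEx251, div_mul_div_comm, ← Complex.exp_add]
  ring_nf

theorem ex251_associativity_general (c x1 x2 x3 x4 x5 y z : ℂ)
    (h1 : x1 * x2 * x3 + x4 * x5 * z + 1 ≠ 0) (h2 : x1 * x2 * x4 + x3 * x5 * z + 1 ≠ 0) :
    kernEx251 c x1 x2 x3 y * kernEx251 c y x4 x5 z =
      kernEx251 c x1 x2 x4
          ((x1 * x2 * x3 + x4 * x5 * z + 1) / (x1 * x2 * x4 + x3 * x5 * z + 1) * y) *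
        kernEx251 c ((x1 * x2 * x3 + x4 * x5 * z + 1) / (x1 * x2 * x4 + x3 * x5 * z + 1) * y)
          x3 x5 z *
        ((x1 * x2 * x3 + x4 * x5 * z + 1) / (x1 * x2 * x4 + x3 * x5 * z + 1)) := by
  set A := x1 * x2 * x3 + x4 * x5 * z + 1
  set B := x1 * x2 * x4 + x3 * x5 * z + 1
  have hAB : A / B ≠ 0 := div_ne_zero h1 h2
  have hweight : A / B * y * B = y * A := by
    rw [mul_right_comm, div_mul_cancel₀ A h2, mul_comm]
  rw [kernEx251_mul_kernEx251, kernEx251_mul_kernEx251, hweight, mul_assoc (A / B),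
    div_mul_eq_mul_div, mul_comm _ (A / B), mul_div_mul_left _ _ hAB]

theorem ex251_associativity (c x1 x2 x3 x4 x5 y z : ℂ)
    (hy : y ≠ 0) (hz : z ≠ 0)
    (h1 : x1 * x2 * x3 + x4 * x5 * z + 1 ≠ 0) (h2 : x1 * x2 * x4 + x3 * x5 * z + 1 ≠ 0) :
    kernEx251 c x1 x2 x3 y * kernEx251 c y x4 x5 z =
      kernEx251 c x1 x2 x4
          ((x1 * x2 * x3 + x4 * x5 * z + 1) / (x1 * x2 * x4 + x3 * x5 * z + 1) * y) *
        kernEx251 c ((x1 * x2 * x3 + x4 * x5 * z + 1) / (x1 * x2 * x4 + x3 * x5 * z + 1) * y)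
          x3 x5 z *
        ((x1 * x2 * x3 + x4 * x5 * z + 1) / (x1 * x2 * x4 + x3 * x5 * z + 1)) :=
  ex251_associativity_general c x1 x2 x3 x4 x5 y z h1 h2
end

section
/- Let x1, x2, x3, x4, x5, z, y, w123, w45 be complex numbers satisfying w123^2 = 1 + x1*x2*x3*y and w45^2 = 1 + y*x4*x5*z, and assume x1*x2*x3 - x4*x5*z ≠ 0. Define w124 = ((x1*x2 - x5*z)*x4*w123 + (x3 - x4)*x1*x2*w45)/(x1*x2*x3 - x4*x5*z), w35 = ((x3 - x4)*x5*z*w123 + (x1*x2 - x5*z)*x3*w45)/(x1*x2*x3 - x4*x5*z), and ỹ = (2*(x3 - x4)*(x1*x2 - x5*z)*(w123*w45 - 1) + x3*x4*(x1*x2 - x5*z)^2*y + x1*x2*x5*z*(x3 - x4)^2*y)/(x1*x2*x3 - x4*x5*z)^2. Then w124^2 = 1 + x1*x2*x4*ỹ and w35^2 = 1 + ỹ*x3*x5*z. -/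
/-! Put `a = x1 x2`, `b = x5 z`, `c = x3`, `d = x4`. Both new coordinates are linear forms in
`(w123, w45)` over `D = ac - bd`; squaring one and replacing `w123²`, `w45²` by the equations of
`C1` leaves exactly `D² (1 + ad ỹ)`. The swap `(a, b) ↔ (c, d)` fixes `D`, `ỹ` and the equations
of `C1` and exchanges the two coordinates, so the second equation is the first one in disguise. -/

namespace BirationalMap

/-- The numerator of `ỹ`. -/
def yNum {R : Type*} [CommRing R] (a b c d u v y : R) : R :=
  2 * (c - d) * (a - b) * (u * v - 1) + c * d * (a - b) ^ 2 * y + a * b * (c - d) ^ 2 * y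

theorem yNum_swap {R : Type*} [CommRing R] (a b c d u v y : R) :
    yNum c d a b u v y = yNum a b c d u v y := by
  unfold yNum; ring

theorem sq_linear_form {R : Type*} [CommRing R] {a b c d u v y : R}
    (hu : u ^ 2 = 1 + a * c * y) (hv : v ^ 2 = 1 + d * b * y) :
    ((a - b) * d * u + (c - d) * a * v) ^ 2 =
      (a * c - d * b) ^ 2 + a * d * yNum a b c d u v y := by
  unfold yNum
  linear_combination ((a - b) * d) ^ 2 * hu + ((c - d) * a) ^ 2 * hv

theorem div_sq_linear_form {K : Type*} [Field K] {a b c d u v y : K}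
    (hu : u ^ 2 = 1 + a * c * y) (hv : v ^ 2 = 1 + d * b * y) (hD : a * c - d * b ≠ 0) :
    (((a - b) * d * u + (c - d) * a * v) / (a * c - d * b)) ^ 2 =
      1 + a * d * (yNum a b c d u v y / (a * c - d * b) ^ 2) := by
  rw [div_pow, sq_linear_form hu hv, add_div, div_self (pow_ne_zero 2 hD), mul_div_assoc]

theorem div_sq_linear_form_swap {K : Type*} [Field K] {a b c d u v y : K}
    (hu : u ^ 2 = 1 + a * c * y) (hv : v ^ 2 = 1 + d * b * y) (hD : a * c - d * b ≠ 0) :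
    (((c - d) * b * u + (a - b) * c * v) / (a * c - d * b)) ^ 2 =
      1 + c * b * (yNum a b c d u v y / (a * c - d * b) ^ 2) := by
  have hD' : c * a - b * d = a * c - d * b := by ring
  have := div_sq_linear_form (a := c) (b := d) (c := a) (d := b)
    (by rw [hu, mul_comm a c]) (by rw [hv, mul_comm d b]) (hD' ▸ hD)
  rwa [hD', yNum_swap] at this

end BirationalMap

/-- Example 2.5.2: the birational map `(y, w123, w45) ↦ (ỹ, w124, w35)` sends points of the
curve `C1` (given by `w123² = 1 + x1x2x3y`, `w45² = 1 + y x4x5z`) to points of the curve `C2`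
(given by `w124² = 1 + x1x2x4 ỹ`, `w35² = 1 + ỹ x3x5z`). -/
theorem ex252_birational_map (x1 x2 x3 x4 x5 z y w123 w45 : ℂ)
    (h123 : w123 ^ 2 = 1 + x1 * x2 * x3 * y)
    (h45 : w45 ^ 2 = 1 + y * x4 * x5 * z)
    (hden : x1 * x2 * x3 - x4 * x5 * z ≠ 0) :
    (((x1 * x2 - x5 * z) * x4 * w123 + (x3 - x4) * x1 * x2 * w45) /
          (x1 * x2 * x3 - x4 * x5 * z)) ^ 2 =
        1 + x1 * x2 * x4 *
          ((2 * (x3 - x4) * (x1 * x2 - x5 * z) * (w123 * w45 - 1) +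
              x3 * x4 * (x1 * x2 - x5 * z) ^ 2 * y +
              x1 * x2 * x5 * z * (x3 - x4) ^ 2 * y) /
            (x1 * x2 * x3 - x4 * x5 * z) ^ 2) ∧
      (((x3 - x4) * x5 * z * w123 + (x1 * x2 - x5 * z) * x3 * w45) /
          (x1 * x2 * x3 - x4 * x5 * z)) ^ 2 =
        1 + ((2 * (x3 - x4) * (x1 * x2 - x5 * z) * (w123 * w45 - 1) +
              x3 * x4 * (x1 * x2 - x5 * z) ^ 2 * y +
              x1 * x2 * x5 * z * (x3 - x4) ^ 2 * y) /
            (x1 * x2 * x3 - x4 * x5 * z) ^ 2) * x3 * x5 * z := by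
  have hv : w45 ^ 2 = 1 + x4 * (x5 * z) * y := by rw [h45]; ring
  have hD : x1 * x2 * x3 - x4 * (x5 * z) ≠ 0 := by rwa [← mul_assoc]
  have first := BirationalMap.div_sq_linear_form h123 hv hD
  have second := BirationalMap.div_sq_linear_form_swap h123 hv hD
  unfold BirationalMap.yNum at first second
  constructor
  · convert first using 3 <;> ring
  · convert second using 2 <;> ring
end

section
/- Fix real numbers x1, x2, x3, x4, x5, z with x1*x2*x3 - x4*x5*z ≠ 0, and let I ⊆ ℝ be an open interval on which there are differentiable functions w123(y), w45(y) with w123(y)^2 = 1 + x1*x2*x3*y, w45(y)^2 = 1 + y*x4*x5*z, and w123(y) ≠ 0, w45(y) ≠ 0 for all y ∈ I. Define ỹ(y) = (2*(x3 - x4)*(x1*x2 - x5*z)*(w123(y)*w45(y) - 1) + x3*x4*(x1*x2 - x5*z)^2*y + x1*x2*x5*z*(x3 - x4)^2*y)/(x1*x2*x3 - x4*x5*z)^2, w124(y) = ((x1*x2 - x5*z)*x4*w123(y) + (x3 - x4)*x1*x2*w45(y))/(x1*x2*x3 - x4*x5*z), and w35(y) = ((x3 - x4)*x5*z*w123(y)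 + (x1*x2 - x5*z)*x3*w45(y))/(x1*x2*x3 - x4*x5*z). Then for every y ∈ I, the derivative of ỹ satisfies ỹ'(y) = (w124(y)*w35(y))/(w123(y)*w45(y)). -/
/-!
Differentiating `w123² = 1 + x1 x2 x3 y` and `w45² = 1 + x4 x5 z y` gives
`2 w123 w123' = x1 x2 x3` and `2 w45 w45' = x4 x5 z`. Substituting these into the derivative of
`ỹ` turns the claim into a polynomial identity in `w123, w45`: both sides, multiplied by
`w123 w45 (x1 x2 x3 - x4 x5 z)²`, expand to the same quadratic form in `w123, w45`.
-/

open Filter Topology Set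

theorem HasDerivAt.two_mul_eq_of_sq_eventuallyEq {𝕜 : Type*} [NontriviallyNormedField 𝕜]
    {f : 𝕜 → 𝕜} {f' c k y : 𝕜} (hf : HasDerivAt f f' y)
    (hsq : ∀ᶠ t in 𝓝 y, f t ^ 2 = c + k * t) : 2 * f y * f' = k := by
  have haffine : HasDerivAt (fun t => c + k * t) k y := by
    simpa using ((hasDerivAt_id y).const_mul k).const_add c
  have hsquare : HasDerivAt (fun t => f t ^ 2) k y := haffine.congr_of_eventuallyEq hsq
  simpa using (hf.pow 2).unique hsquare

theorem jacobian_identity {K : Type*} [Field K] (x1 x2 x3 x4 x5 z w1 w2 d1 d2 : K)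
    (hw1 : w1 ≠ 0) (hw2 : w2 ≠ 0)
    (hd1 : 2 * w1 * d1 = x1 * x2 * x3) (hd2 : 2 * w2 * d2 = x4 * x5 * z) :
    (2 * (x3 - x4) * (x1 * x2 - x5 * z) * (d1 * w2 + w1 * d2) +
          x3 * x4 * (x1 * x2 - x5 * z) ^ 2 + x1 * x2 * x5 * z * (x3 - x4) ^ 2) /
        (x1 * x2 * x3 - x4 * x5 * z) ^ 2 =
      (((x1 * x2 - x5 * z) * x4 * w1 + (x3 - x4) * x1 * x2 * w2) /
          (x1 * x2 * x3 - x4 * x5 * z) *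
        (((x3 - x4) * x5 * z * w1 + (x1 * x2 - x5 * z) * x3 * w2) /
          (x1 * x2 * x3 - x4 * x5 * z))) / (w1 * w2) := by
  rw [div_mul_div_comm, div_right_comm, ← sq]
  congr 1
  field_simp
  linear_combination (x3 - x4) * (x1 * x2 - x5 * z) * (w2 ^ 2 * hd1 + w1 ^ 2 * hd2)

theorem ex252_jacobian_general (x1 x2 x3 x4 x5 z : ℝ)
    (a b : ℝ) (w123 w45 : ℝ → ℝ)
    (hw123diff : ∀ y ∈ Set.Ioo a b, DifferentiableAt ℝ w123 y)
    (hw45diff : ∀ y ∈ Set.Ioo a b, DifferentiableAt ℝ w45 y)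
    (h123 : ∀ y ∈ Set.Ioo a b, (w123 y) ^ 2 = 1 + x1 * x2 * x3 * y)
    (h45 : ∀ y ∈ Set.Ioo a b, (w45 y) ^ 2 = 1 + y * x4 * x5 * z)
    (h123ne : ∀ y ∈ Set.Ioo a b, w123 y ≠ 0)
    (h45ne : ∀ y ∈ Set.Ioo a b, w45 y ≠ 0) :
    ∀ y ∈ Set.Ioo a b,
      deriv (fun y' =>
          (2 * (x3 - x4) * (x1 * x2 - x5 * z) * (w123 y' * w45 y' - 1) +
              x3 * x4 * (x1 * x2 - x5 * z) ^ 2 * y' +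
              x1 * x2 * x5 * z * (x3 - x4) ^ 2 * y') /
            (x1 * x2 * x3 - x4 * x5 * z) ^ 2) y =
        (((x1 * x2 - x5 * z) * x4 * w123 y + (x3 - x4) * x1 * x2 * w45 y) /
            (x1 * x2 * x3 - x4 * x5 * z) *
          (((x3 - x4) * x5 * z * w123 y + (x1 * x2 - x5 * z) * x3 * w45 y) /
            (x1 * x2 * x3 - x4 * x5 * z))) /
        (w123 y * w45 y) := by
  intro y hy
  have hnear : ∀ᶠ t in 𝓝 y, t ∈ Ioo a b := isOpen_Ioo.mem_nhds hy
  have hd123 := (hw123diff y hy).hasDerivAt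
  have hd45 := (hw45diff y hy).hasDerivAt
  have e123 := hd123.two_mul_eq_of_sq_eventuallyEq (hnear.mono h123)
  have e45 := hd45.two_mul_eq_of_sq_eventuallyEq (c := 1) (k := x4 * x5 * z)
    (hnear.mono fun t ht => (h45 t ht).trans (by ring))
  refine (HasDerivAt.deriv ?_).trans
    (jacobian_identity x1 x2 x3 x4 x5 z _ _ _ _ (h123ne y hy) (h45ne y hy) e123 e45)
  exact (((((hd123.mul hd45).sub_const 1).const_mul _).add (hasDerivAt_const_mul _)).add
    (hasDerivAt_const_mul _)).div_const _

/-- Example 2.5.2: the Jacobian identity `dỹ/dy = (w124·w35)/(w123·w45)` along the curve,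
coming from comparing the `c`-independent factors of the associativity identity. -/
theorem ex252_jacobian (x1 x2 x3 x4 x5 z : ℝ)
    (hden : x1 * x2 * x3 - x4 * x5 * z ≠ 0)
    (a b : ℝ) (w123 w45 : ℝ → ℝ)
    (hw123diff : ∀ y ∈ Set.Ioo a b, DifferentiableAt ℝ w123 y)
    (hw45diff : ∀ y ∈ Set.Ioo a b, DifferentiableAt ℝ w45 y)
    (h123 : ∀ y ∈ Set.Ioo a b, (w123 y) ^ 2 = 1 + x1 * x2 * x3 * y)
    (h45 : ∀ y ∈ Set.Ioo a b, (w45 y) ^ 2 = 1 + y * x4 * x5 * z)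
    (h123ne : ∀ y ∈ Set.Ioo a b, w123 y ≠ 0)
    (h45ne : ∀ y ∈ Set.Ioo a b, w45 y ≠ 0) :
    ∀ y ∈ Set.Ioo a b,
      deriv (fun y' =>
          (2 * (x3 - x4) * (x1 * x2 - x5 * z) * (w123 y' * w45 y' - 1) +
              x3 * x4 * (x1 * x2 - x5 * z) ^ 2 * y' +
              x1 * x2 * x5 * z * (x3 - x4) ^ 2 * y') /
            (x1 * x2 * x3 - x4 * x5 * z) ^ 2) y =
        (((x1 * x2 - x5 * z) * x4 * w123 y + (x3 - x4) * x1 * x2 * w45 y) /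
            (x1 * x2 * x3 - x4 * x5 * z) *
          (((x3 - x4) * x5 * z * w123 y + (x1 * x2 - x5 * z) * x3 * w45 y) /
            (x1 * x2 * x3 - x4 * x5 * z))) /
        (w123 y * w45 y) :=
  ex252_jacobian_general x1 x2 x3 x4 x5 z a b w123 w45 hw123diff hw45diff h123 h45 h123ne h45ne
end

section
/- Let n ≥ 1 be a natural number. For natural numbers a, b, c, write T(a,b,c) for the condition: a ≤ b + c, b ≤ a + c, c ≤ a + b, and a + b + c ≤ 2n. Then for all a, b, c, d ∈ {0, 1, ..., n}, the number of j ∈ {0, 1, ..., n} with T(a,b,j) and T(j,c,d) equals the number of j ∈ {0, 1, ..., n} with T(a,c,j) and T(j,b,d). Consequently, the ℚ-algebra A_n with basis e_0, ..., e_n and product e_a · e_b = Σ_c [T(a,b,c)] e_c is commutative and associative. -/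
/-- The tetrahedron condition of Section 1.5, in integer indices at level `n`:
`T n a b c` holds iff `a ≤ b + c`, `b ≤ a + c`, `c ≤ a + b` and `a + b + c ≤ 2n`. -/
def tetra (n a b c : ℕ) : Prop :=
  a ≤ b + c ∧ b ≤ a + c ∧ c ≤ a + b ∧ a + b + c ≤ 2 * n

instance (n a b c : ℕ) : Decidable (tetra n a b c) := by
  unfold tetra; infer_instance

/-- The product of the algebra `A_n = ℚ^{n+1}` with `e_a · e_b = Σ_c [tetra n a b c] e_c`. -/
def verlindeMul (n : ℕ) (f g : Fin (n + 1) → ℚ) : Fin (n + 1) → ℚ :=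
  fun c => ∑ a : Fin (n + 1), ∑ b : Fin (n + 1),
    f a * g b * (if tetra n (a : ℕ) (b : ℕ) (c : ℕ) then 1 else 0)

/-!
For fixed `a, b, c, d ≤ n` the admissible `j` form the interval
`max (|a - b|) (|c - d|) ≤ j ≤ min (a + b) (2n - a - b) (c + d) (2n - c - d)`.
The length of this interval is the smallest difference "upper bound minus lower bound", and
these sixteen differences are `2x`, `2n - 2x`, `s - 2x` and `2n - s + 2x` for `x ∈ {a, b, c, d}`
and `s = a + b + c + d`. So the number of `j` depends symmetrically on `a, b, c, d`, which is
the associativity of the algebra.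
-/

open Finset

theorem tetra_comm {n a b c : ℕ} : tetra n a b c ↔ tetra n b a c := by
  unfold tetra
  omega

def tetraGap (n a b c d : ℤ) : ℤ :=
  let s := a + b + c + d
  let g x := min (min (2 * x) (2 * n - 2 * x)) (min (s - 2 * x) (2 * n - s + 2 * x))
  min (min (g a) (g b)) (min (g c) (g d))

theorem tetraGap_swap (n a b c d : ℤ) : tetraGap n a b c d = tetraGap n a c b d := by
  simp only [tetraGap, add_right_comm a b c]
  exact min_min_min_comm ..

theorem min_sub_max_eq {α : Type*} [AddCommGroup α] [LinearOrder α] [IsOrderedAddMonoid α]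
    (u₁ u₂ l₁ l₂ : α) :
    min u₁ u₂ - max l₁ l₂ =
      min (min (u₁ - l₁) (u₂ - l₁)) (min (u₁ - l₂) (u₂ - l₂)) := by
  rw [← min_sub_sub_right, ← min_sub_sub_left, ← min_sub_sub_left, min_min_min_comm]

theorem min_sub_max_eq_tetraGap (n a b c d : ℤ) :
    min (min (a + b) (2 * n - a - b)) (min (c + d) (2 * n - c - d)) -
        max (max (a - b) (b - a)) (max (c - d) (d - c)) = tetraGap n a b c d := by
  simp only [tetraGap, min_sub_max_eq]
  apply le_antisymm <;> simp only [le_min_iff, min_le_iff] <;> omega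

theorem filter_tetra_tetra_eq_Icc {n a b c d : ℕ} (ha : a ≤ n) (hb : b ≤ n) (hc : c ≤ n)
    (hd : d ≤ n) :
    (range (n + 1)).filter (fun j => tetra n a b j ∧ tetra n j c d) =
      Icc (max (max (a - b) (b - a)) (max (c - d) (d - c)))
        (min (min (a + b) (2 * n - a - b)) (min (c + d) (2 * n - c - d))) := by
  ext j
  rw [mem_filter]
  simp only [mem_range, mem_Icc, tetra]
  omega

theorem max_natCast_tsub (a b : ℕ) :
    max ((a - b : ℕ) : ℤ) ((b - a : ℕ) : ℤ) = max ((a : ℤ) - b) (b - a) := by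
  omega

theorem card_filter_tetra_tetra {n a b c d : ℕ} (ha : a ≤ n) (hb : b ≤ n) (hc : c ≤ n)
    (hd : d ≤ n) :
    (#((range (n + 1)).filter (fun j => tetra n a b j ∧ tetra n j c d)) : ℤ) =
      max (tetraGap n a b c d + 1) 0 := by
  have hab : a + b ≤ 2 * n := by omega
  have hcd : c + d ≤ 2 * n := by omega
  have hhi : ((min (min (a + b) (2 * n - a - b)) (min (c + d) (2 * n - c - d)) : ℕ) : ℤ) =
      min (min ((a : ℤ) + b) (2 * n - a - b)) (min ((c : ℤ) + d) (2 * n - c - d)) := by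
    push_cast [Nat.sub_sub, Nat.cast_sub hab, Nat.cast_sub hcd, sub_sub]
    rfl
  have hlo : ((max (max (a - b) (b - a)) (max (c - d) (d - c)) : ℕ) : ℤ) =
      max (max ((a : ℤ) - b) (b - a)) (max ((c : ℤ) - d) (d - c)) := by
    push_cast [max_natCast_tsub]
    rfl
  rw [filter_tetra_tetra_eq_Icc ha hb hc hd, Nat.card_Icc, ← min_sub_max_eq_tetraGap, ← hhi,
    ← hlo]
  omega

theorem card_filter_tetra_tetra_swap {n a b c d : ℕ} (ha : a ≤ n) (hb : b ≤ n) (hc : c ≤ n)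
    (hd : d ≤ n) :
    #((range (n + 1)).filter (fun j => tetra n a b j ∧ tetra n j c d)) =
      #((range (n + 1)).filter (fun j => tetra n a c j ∧ tetra n j b d)) := by
  have h := card_filter_tetra_tetra ha hb hc hd
  rw [tetraGap_swap, ← card_filter_tetra_tetra ha hc hb hd] at h
  exact_mod_cast h

theorem sum_tetra_mul_tetra (n a b c d : ℕ) :
    ∑ x : Fin (n + 1),
        (if tetra n a b x then (1 : ℚ) else 0) * (if tetra n x c d then 1 else 0) =
      #((range (n + 1)).filter (fun j => tetra n a b j ∧ tetra n j c d)) := by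
  simp only [ite_zero_mul_ite_zero, mul_one]
  rw [Fin.sum_univ_eq_sum_range (fun j => if tetra n a b j ∧ tetra n j c d then (1 : ℚ) else 0),
    sum_boole]

section StructureConstants

variable {ι R : Type*} [Fintype ι] [CommSemiring R] (N : ι → ι → ι → R)

def structConstMul (f g : ι → R) : ι → R :=
  fun c => ∑ a, ∑ b, f a * g b * N a b c

theorem structConstMul_comm (hN : ∀ a b c, N a b c = N b a c) (f g : ι → R) :
    structConstMul N f g = structConstMul N g f := by
  funext c
  unfold structConstMul
  rw [sum_comm]
  exact sum_congr rfl fun b _ => sum_congr rfl fun a _ => by rw [hN, mul_comm (f a)]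

theorem structConstMul_assoc
    (hN : ∀ a b c d, ∑ x, N a b x * N x c d = ∑ x, N b c x * N a x d) (f g h : ι → R) :
    structConstMul N (structConstMul N f g) h = structConstMul N f (structConstMul N g h) := by
  funext d
  calc structConstMul N (structConstMul N f g) h d
      = ∑ a, ∑ b, ∑ c, ∑ x, f a * g b * h c * (N a b x * N x c d) := by
        simp only [structConstMul, sum_mul]
        rw [sum_comm]
        conv_lhs => enter [2, c]; rw [← sum_comm_cycle]
        rw [← sum_comm_cycle]
        congr! 4 with a b c x
        ring
    _ = ∑ a, ∑ b, ∑ c, ∑ x, f a * g b * h c * (N b c x * N a x d) := by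
        simp only [← mul_sum, hN]
    _ = structConstMul N f (structConstMul N g h) d := by
        simp only [structConstMul, mul_sum, sum_mul]
        conv_rhs => enter [2, a]; rw [← sum_comm_cycle]
        congr! 4 with a b c x
        ring

end StructureConstants

theorem verlindeMul_eq_structConstMul (n : ℕ) :
    verlindeMul n = structConstMul fun a b c : Fin (n + 1) =>
      if tetra n (a : ℕ) (b : ℕ) (c : ℕ) then (1 : ℚ) else 0 :=
  rfl

theorem verlinde_assoc_general (n : ℕ) :
    (∀ a b c d : ℕ, a ≤ n → b ≤ n → c ≤ n → d ≤ n →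
      ((Finset.range (n + 1)).filter (fun j => tetra n a b j ∧ tetra n j c d)).card =
        ((Finset.range (n + 1)).filter (fun j => tetra n a c j ∧ tetra n j b d)).card) ∧
    (∀ f g : Fin (n + 1) → ℚ, verlindeMul n f g = verlindeMul n g f) ∧
    (∀ f g h : Fin (n + 1) → ℚ,
      verlindeMul n (verlindeMul n f g) h = verlindeMul n f (verlindeMul n g h)) := by
  refine ⟨fun a b c d => card_filter_tetra_tetra_swap, ?_, ?_⟩
  · rw [verlindeMul_eq_structConstMul]
    exact structConstMul_comm _ fun a b c => by simp only [tetra_comm]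
  · rw [verlindeMul_eq_structConstMul]
    refine structConstMul_assoc _ fun a b c d => ?_
    -- `tetra_comm` rewrites both sides, leaving the middle swap at `(b, a, c, d)`
    simp only [tetra_comm (a := (a : ℕ)), sum_tetra_mul_tetra]
    exact_mod_cast card_filter_tetra_tetra_swap b.is_le a.is_le c.is_le d.is_le

theorem verlinde_assoc (n : ℕ) (hn : 1 ≤ n) :
    (∀ a b c d : ℕ, a ≤ n → b ≤ n → c ≤ n → d ≤ n →
      ((Finset.range (n + 1)).filter (fun j => tetra n a b j ∧ tetra n j c d)).card =
        ((Finset.range (n + 1)).filter (fun j => tetra n a c j ∧ tetra n j b d)).card) ∧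
    (∀ f g : Fin (n + 1) → ℚ, verlindeMul n f g = verlindeMul n g f) ∧
    (∀ f g h : Fin (n + 1) → ℚ,
      verlindeMul n (verlindeMul n f g) h = verlindeMul n f (verlindeMul n g h)) :=
  verlinde_assoc_general n
end

section
/- Let s, t ∈ ℝ with t ≠ 0 and t ≠ 1, and let F : ℝ × ℝ → ℝ be differentiable. For positive, pairwise distinct real numbers x1, x2, x3, define u = t^2 (x1-1)(x2-1)(x3-1) / ((t-1)^2 x1 x2 x3), v = (x1-t)(x2-t)(x3-t) / ((t-1)^2 x1 x2 x3), and K(x1,x2,x3) = (x1 x2 x3)^s · F(u, v). Then K satisfies the first-order partial differential equation L K = 0, i.e. [x1(x1-1)(x1-t)/((x1-x2)(x1-x3))] ∂K/∂x1 + [x2(x2-1)(x2-t)/((x2-x1)(x2-x3))] ∂K/∂x2 + [x3(x3-1)(x3-t)/((x3-x1)(x3-x2))] ∂K/∂x3 = s · K. -/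
/-!
Write `L = X - s` with `X = ∑ cᵢ ∂ᵢ`, `cᵢ = xᵢ(xᵢ-1)(xᵢ-t) / ∏_{j≠i} (xᵢ-xⱼ)`. Each factor of
`K` obeys an Euler-type relation in every variable: `xᵢ ∂ᵢ P = s P` for `P = (x₁x₂x₃)^s`,
`xᵢ(xᵢ-1) ∂ᵢ u = u` and `xᵢ(xᵢ-t) ∂ᵢ v = t v`. So `X P`, `X u`, `X v` become sums
`∑ q(xᵢ) / ∏_{j≠i} (xᵢ-xⱼ)` with `deg q ≤ 2`, which equal the `x²`-coefficient of `q`: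
`X P = s P` and `X u = X v = 0`. The chain rule then gives `X K = s K` for every `F`.
-/

/-- The kernel `K(x1,x2,x3) = (x1 x2 x3)^s F(u,v)` of Theorem 3.3.2, with
`u = t²(x1-1)(x2-1)(x3-1)/((t-1)² x1 x2 x3)` and `v = (x1-t)(x2-t)(x3-t)/((t-1)² x1 x2 x3)`. -/
noncomputable def kernHitchin4 (s t : ℝ) (F : ℝ × ℝ → ℝ) (x1 x2 x3 : ℝ) : ℝ :=
  (x1 * x2 * x3) ^ s *
    F (t ^ 2 * (x1 - 1) * (x2 - 1) * (x3 - 1) / ((t - 1) ^ 2 * (x1 * x2 * x3)),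
       (x1 - t) * (x2 - t) * (x3 - t) / ((t - 1) ^ 2 * (x1 * x2 * x3)))

section HitchinOperator

variable {𝕜 : Type*} [Field 𝕜] {x₁ x₂ x₃ : 𝕜}

theorem quadratic_divided_difference (h₁₂ : x₁ ≠ x₂) (h₁₃ : x₁ ≠ x₃) (h₂₃ : x₂ ≠ x₃)
    (a b c : 𝕜) :
    (a * x₁ ^ 2 + b * x₁ + c) / ((x₁ - x₂) * (x₁ - x₃)) +
        (a * x₂ ^ 2 + b * x₂ + c) / ((x₂ - x₁) * (x₂ - x₃)) +
        (a * x₃ ^ 2 + b * x₃ + c) / ((x₃ - x₁) * (x₃ - x₂)) = a := by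
  have := sub_ne_zero.2 h₁₂
  have := sub_ne_zero.2 h₁₃
  have := sub_ne_zero.2 h₂₃
  have := sub_ne_zero.2 h₁₂.symm
  have := sub_ne_zero.2 h₁₃.symm
  have := sub_ne_zero.2 h₂₃.symm
  field_simp
  ring

def hitchinCoeff (r r' xᵢ xⱼ xₖ : 𝕜) : 𝕜 :=
  xᵢ * (xᵢ - r) * (xᵢ - r') / ((xᵢ - xⱼ) * (xᵢ - xₖ))

/-- `X` at `(x₁, x₂, x₃)`, applied to a function with partial derivatives `d₁, d₂, d₃` there
(operator roots `r = 1`, `r' = t` in the paper). -/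
def hitchinOp {M : Type*} [AddCommMonoid M] [Module 𝕜 M] (r r' x₁ x₂ x₃ : 𝕜) (d₁ d₂ d₃ : M) :
    M :=
  hitchinCoeff r r' x₁ x₂ x₃ • d₁ + hitchinCoeff r r' x₂ x₁ x₃ • d₂ +
    hitchinCoeff r r' x₃ x₁ x₂ • d₃

theorem hitchinOp_comm {M : Type*} [AddCommMonoid M] [Module 𝕜 M] (r r' : 𝕜) (d₁ d₂ d₃ : M) :
    hitchinOp r r' x₁ x₂ x₃ d₁ d₂ d₃ = hitchinOp r' r x₁ x₂ x₃ d₁ d₂ d₃ := by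
  simp only [hitchinOp, hitchinCoeff, mul_right_comm _ (_ - r) (_ - r')]

theorem hitchinOp_mul_add_mul_map {M Φ : Type*} [AddCommMonoid M] [Module 𝕜 M] [FunLike Φ M 𝕜]
    [LinearMapClass Φ 𝕜 M 𝕜] (r r' : 𝕜) (φ : Φ) (c q e₁ e₂ e₃ : 𝕜) (d₁ d₂ d₃ : M) :
    hitchinOp r r' x₁ x₂ x₃ (e₁ * c + q * φ d₁) (e₂ * c + q * φ d₂) (e₃ * c + q * φ d₃) =
      hitchinOp r r' x₁ x₂ x₃ e₁ e₂ e₃ * c + q * φ (hitchinOp r r' x₁ x₂ x₃ d₁ d₂ d₃) := by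
  simp only [hitchinOp, map_add, map_smul, smul_eq_mul]
  ring

variable {d₁ d₂ d₃ w : 𝕜} (r r' : 𝕜)

theorem hitchinOp_eq_of_mul_eq (h₁₂ : x₁ ≠ x₂) (h₁₃ : x₁ ≠ x₃) (h₂₃ : x₂ ≠ x₃)
    (hd₁ : x₁ * d₁ = w) (hd₂ : x₂ * d₂ = w) (hd₃ : x₃ * d₃ = w) :
    hitchinOp r r' x₁ x₂ x₃ d₁ d₂ d₃ = w := by
  have hsum := quadratic_divided_difference h₁₂ h₁₃ h₂₃ 1 (-(r + r')) (r * r')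
  simp only [hitchinOp, hitchinCoeff, smul_eq_mul]
  linear_combination (x₁ - r) * (x₁ - r') / ((x₁ - x₂) * (x₁ - x₃)) * hd₁ +
    (x₂ - r) * (x₂ - r') / ((x₂ - x₁) * (x₂ - x₃)) * hd₂ +
    (x₃ - r) * (x₃ - r') / ((x₃ - x₁) * (x₃ - x₂)) * hd₃ + w * hsum

theorem hitchinOp_eq_zero_of_mul_sub_mul_eq (h₁₂ : x₁ ≠ x₂) (h₁₃ : x₁ ≠ x₃) (h₂₃ : x₂ ≠ x₃)
    (hd₁ : x₁ * (x₁ - r) * d₁ = w) (hd₂ : x₂ * (x₂ - r) * d₂ = w)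
    (hd₃ : x₃ * (x₃ - r) * d₃ = w) :
    hitchinOp r r' x₁ x₂ x₃ d₁ d₂ d₃ = 0 := by
  have hsum := quadratic_divided_difference h₁₂ h₁₃ h₂₃ 0 1 (-r')
  simp only [hitchinOp, hitchinCoeff, smul_eq_mul]
  linear_combination (x₁ - r') / ((x₁ - x₂) * (x₁ - x₃)) * hd₁ +
    (x₂ - r') / ((x₂ - x₁) * (x₂ - x₃)) * hd₂ +
    (x₃ - r') / ((x₃ - x₁) * (x₃ - x₂)) * hd₃ + w * hsum

end HitchinOperator

theorem hasDerivAt_mul_sub_div_self (m r : ℝ) {y : ℝ} (hy : y ≠ 0) :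
    HasDerivAt (fun x => m * (x - r) / x) (m * r / y ^ 2) y := by
  refine ((((hasDerivAt_id' y).sub_const r).const_mul m).div (hasDerivAt_id' y) hy).congr_deriv ?_
  ring

theorem exists_hasDerivAt_rpow_mul_mul {s a b y : ℝ} (hy : y ≠ 0) (ha : a ≠ 0) (hb : b ≠ 0) :
    ∃ e, HasDerivAt (fun x => (x * a * b) ^ s) e y ∧ y * e = s * (y * a * b) ^ s := by
  have hQ : y * a * b ≠ 0 := by positivity
  refine ⟨1 * a * b * s * (y * a * b) ^ (s - 1),
    (((hasDerivAt_id' y).mul_const a).mul_const b).rpow_const (Or.inl hQ), ?_⟩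
  rw [Real.rpow_sub_one hQ]
  field_simp

noncomputable def hitchinUV (t x₁ x₂ x₃ : ℝ) : ℝ × ℝ :=
  (t ^ 2 * (x₁ - 1) * (x₂ - 1) * (x₃ - 1) / ((t - 1) ^ 2 * (x₁ * x₂ * x₃)),
    (x₁ - t) * (x₂ - t) * (x₃ - t) / ((t - 1) ^ 2 * (x₁ * x₂ * x₃)))

theorem kernHitchin4_eq (s t : ℝ) (F : ℝ × ℝ → ℝ) (x₁ x₂ x₃ : ℝ) :
    kernHitchin4 s t F x₁ x₂ x₃ = (x₁ * x₂ * x₃) ^ s * F (hitchinUV t x₁ x₂ x₃) :=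
  rfl

theorem hitchinUV_swap₁₂ (t x₁ x₂ x₃ : ℝ) :
    hitchinUV t x₂ x₁ x₃ = hitchinUV t x₁ x₂ x₃ :=
  Prod.ext (by simp only [hitchinUV]; ring) (by simp only [hitchinUV]; ring)

theorem hitchinUV_rotate (t x₁ x₂ x₃ : ℝ) :
    hitchinUV t x₃ x₁ x₂ = hitchinUV t x₁ x₂ x₃ :=
  Prod.ext (by simp only [hitchinUV]; ring) (by simp only [hitchinUV]; ring)

theorem exists_hasDerivAt_hitchinUV (t a b : ℝ) {y : ℝ} (hy : y ≠ 0) :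
    ∃ d : ℝ × ℝ, HasDerivAt (fun x => hitchinUV t x a b) d y ∧
      y * (y - 1) * d.1 = (hitchinUV t y a b).1 ∧
      y * (y - t) * d.2 = t * (hitchinUV t y a b).2 := by
  set m₁ := t ^ 2 * (a - 1) * (b - 1) / ((t - 1) ^ 2 * (a * b))
  set m₂ := (a - t) * (b - t) / ((t - 1) ^ 2 * (a * b))
  have hpoint : ∀ x, hitchinUV t x a b = (m₁ * (x - 1) / x, m₂ * (x - t) / x) := fun x =>
    Prod.ext (by simp only [hitchinUV, m₁, div_eq_mul_inv, mul_inv]; ring)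
      (by simp only [hitchinUV, m₂, div_eq_mul_inv, mul_inv]; ring)
  simp only [hpoint]
  refine ⟨_, (hasDerivAt_mul_sub_div_self m₁ 1 hy).prodMk
    (hasDerivAt_mul_sub_div_self m₂ t hy), ?_, ?_⟩ <;>
  · field_simp

theorem kernHitchin4_swap₁₂ (s t : ℝ) (F : ℝ × ℝ → ℝ) (x₁ x₂ x₃ : ℝ) :
    kernHitchin4 s t F x₂ x₁ x₃ = kernHitchin4 s t F x₁ x₂ x₃ := by
  rw [kernHitchin4_eq, kernHitchin4_eq, hitchinUV_swap₁₂, mul_comm x₂ x₁]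

theorem kernHitchin4_rotate (s t : ℝ) (F : ℝ × ℝ → ℝ) (x₁ x₂ x₃ : ℝ) :
    kernHitchin4 s t F x₃ x₁ x₂ = kernHitchin4 s t F x₁ x₂ x₃ := by
  rw [kernHitchin4_eq, kernHitchin4_eq, hitchinUV_rotate, mul_rotate x₃ x₁ x₂]

theorem exists_hasDerivAt_kernHitchin4 (s t : ℝ) {F : ℝ × ℝ → ℝ} {y a b : ℝ}
    (hF : DifferentiableAt ℝ F (hitchinUV t y a b)) (hy : y ≠ 0) (ha : a ≠ 0) (hb : b ≠ 0) :
    ∃ (e : ℝ) (d : ℝ × ℝ), HasDerivAt (fun x => kernHitchin4 s t F x a b)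
        (e * F (hitchinUV t y a b) +
          (y * a * b) ^ s * fderiv ℝ F (hitchinUV t y a b) d) y ∧
      y * e = s * (y * a * b) ^ s ∧
      y * (y - 1) * d.1 = (hitchinUV t y a b).1 ∧
      y * (y - t) * d.2 = t * (hitchinUV t y a b).2 := by
  obtain ⟨e, he, he_euler⟩ := exists_hasDerivAt_rpow_mul_mul (s := s) hy ha hb
  obtain ⟨d, hd, hd_euler⟩ := exists_hasDerivAt_hitchinUV t a b hy
  exact ⟨e, d, he.mul (hF.hasFDerivAt.comp_hasDerivAt y hd), he_euler, hd_euler⟩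

theorem kernHitchin4_LK_eq_zero_general (s t : ℝ)
    (F : ℝ × ℝ → ℝ) (hF : Differentiable ℝ F) :
    ∀ x1 x2 x3 : ℝ, 0 < x1 → 0 < x2 → 0 < x3 →
      x1 ≠ x2 → x1 ≠ x3 → x2 ≠ x3 →
      x1 * (x1 - 1) * (x1 - t) / ((x1 - x2) * (x1 - x3)) *
          deriv (fun x => kernHitchin4 s t F x x2 x3) x1 +
        x2 * (x2 - 1) * (x2 - t) / ((x2 - x1) * (x2 - x3)) *
          deriv (fun x => kernHitchin4 s t F x1 x x3) x2 +
        x3 * (x3 - 1) * (x3 - t) / ((x3 - x1) * (x3 - x2)) *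
          deriv (fun x => kernHitchin4 s t F x1 x2 x) x3 =
      s * kernHitchin4 s t F x1 x2 x3 := by
  intro x1 x2 x3 hx1 hx2 hx3 h12 h13 h23
  obtain ⟨e₁, d₁, hK₁, he₁, hu₁, hv₁⟩ :=
    exists_hasDerivAt_kernHitchin4 s t (hF _) hx1.ne' hx2.ne' hx3.ne'
  obtain ⟨e₂, d₂, hK₂, he₂, hu₂, hv₂⟩ :=
    exists_hasDerivAt_kernHitchin4 s t (hF _) hx2.ne' hx1.ne' hx3.ne'
  obtain ⟨e₃, d₃, hK₃, he₃, hu₃, hv₃⟩ :=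
    exists_hasDerivAt_kernHitchin4 s t (hF _) hx3.ne' hx1.ne' hx2.ne'
  -- `K` is symmetric, so the second and third slices are first-variable slices of `K`
  -- at permuted points; bring their data back to the point `(x1, x2, x3)`.
  rw [show x2 * x1 * x3 = x1 * x2 * x3 by ring] at hK₂ he₂
  rw [hitchinUV_swap₁₂] at hK₂ hu₂ hv₂
  rw [show x3 * x1 * x2 = x1 * x2 * x3 by ring] at hK₃ he₃
  rw [hitchinUV_rotate] at hK₃ hu₃ hv₃
  have hslice₂ : (fun x => kernHitchin4 s t F x1 x x3) = fun x => kernHitchin4 s t F x x1 x3 :=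
    funext fun x => (kernHitchin4_swap₁₂ s t F x1 x x3).symm
  have hslice₃ : (fun x => kernHitchin4 s t F x1 x2 x) = fun x => kernHitchin4 s t F x x1 x2 :=
    funext fun x => (kernHitchin4_rotate s t F x1 x2 x).symm
  have he : hitchinOp 1 t x1 x2 x3 e₁ e₂ e₃ = s * (x1 * x2 * x3) ^ s :=
    hitchinOp_eq_of_mul_eq 1 t h12 h13 h23 he₁ he₂ he₃
  have hd : hitchinOp 1 t x1 x2 x3 d₁ d₂ d₃ = 0 := by
    refine Prod.ext (hitchinOp_eq_zero_of_mul_sub_mul_eq 1 t h12 h13 h23 hu₁ hu₂ hu₃) ?_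
    rw [Prod.snd_zero, hitchinOp_comm]
    exact hitchinOp_eq_zero_of_mul_sub_mul_eq t 1 h12 h13 h23 hv₁ hv₂ hv₃
  change hitchinOp 1 t x1 x2 x3 (deriv _ x1) (deriv _ x2) (deriv _ x3) = _
  rw [hK₁.deriv, hslice₂, hK₂.deriv, hslice₃, hK₃.deriv, hitchinOp_mul_add_mul_map, he, hd,
    map_zero, kernHitchin4_eq]
  ring

/-- Theorem 3.3.2 (proof): `K = (x1x2x3)^s F(u,v)` satisfies `L K = 0` for arbitrary
differentiable `F`, where `L` is the first-order operator of the quantized Hitchin system. -/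
theorem kernHitchin4_LK_eq_zero (s t : ℝ) (ht0 : t ≠ 0) (ht1 : t ≠ 1)
    (F : ℝ × ℝ → ℝ) (hF : Differentiable ℝ F) :
    ∀ x1 x2 x3 : ℝ, 0 < x1 → 0 < x2 → 0 < x3 →
      x1 ≠ x2 → x1 ≠ x3 → x2 ≠ x3 →
      x1 * (x1 - 1) * (x1 - t) / ((x1 - x2) * (x1 - x3)) *
          deriv (fun x => kernHitchin4 s t F x x2 x3) x1 +
        x2 * (x2 - 1) * (x2 - t) / ((x2 - x1) * (x2 - x3)) *
          deriv (fun x => kernHitchin4 s t F x1 x x3) x2 +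
        x3 * (x3 - 1) * (x3 - t) / ((x3 - x1) * (x3 - x2)) *
          deriv (fun x => kernHitchin4 s t F x1 x2 x) x3 =
      s * kernHitchin4 s t F x1 x2 x3 :=
  kernHitchin4_LK_eq_zero_general s t F hF
end

section
/- Let α, β ∈ ℝ and let φ : (0,∞) × (0,∞) → [0,∞] be a measurable function satisfying the homogeneity φ(q·A, B/q) = q^{β-α} φ(A,B) for all q, A, B > 0. Then the (Lebesgue) integrals in [0,∞] satisfy: ∫_{(0,∞)^2} (A+B)^{α+β} φ(A,B) dA dB = ( ∫_0^∞ u^β φ(1,u) du ) · ( ∫_0^∞ (1+v^2)^{α+β} v^{-2α-1} dv ). -/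
/-!
Homogeneity gives `φ(A, B) = A^{β-α} φ(1, AB)`. The shear `B = u / A` (so `dB = du / A`) turns the
left side into `∫∫ A⁻¹ (A + u/A)^{α+β} A^{β-α} φ(1, u) dA du`, and for fixed `u` the rescaling
`A = √u v` pulls `u^β` out of the inner integral, leaving a `v`-integral independent of `u`.
-/

open MeasureTheory Set

noncomputable def eulerKernel (α β u A : ℝ) : ℝ :=
  A⁻¹ * ((A + u / A) ^ (α + β) * A ^ (β - α))

theorem lintegral_Ioi_comp_const_mul {c : ℝ} (hc : 0 < c) (f : ℝ → ENNReal) :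
    ∫⁻ x in Ioi 0, f (c * x) = ENNReal.ofReal c⁻¹ * ∫⁻ x in Ioi 0, f x := by
  have he := measurableEmbedding_mulLeft₀ hc.ne'
  have hpre : (c * ·) ⁻¹' Ioi (0:ℝ) = Ioi 0 := by rw [preimage_const_mul_Ioi₀ _ hc, zero_div]
  have hmap : (volume.restrict (Ioi (0:ℝ))).map (c * ·) =
      ENNReal.ofReal c⁻¹ • volume.restrict (Ioi 0) := by
    rw [← hpre, ← he.restrict_map, Real.map_volume_mul_left hc.ne', Measure.restrict_smul,
      abs_of_pos (inv_pos.2 hc), hpre]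
  rw [← he.lintegral_map, hmap, lintegral_smul_measure, smul_eq_mul]

theorem eulerKernel_sq_mul (α β : ℝ) {s v : ℝ} (hs : 0 < s) (hv : 0 < v) :
    eulerKernel α β (s ^ 2) (s * v) =
      s⁻¹ * ((s ^ 2) ^ β * ((1 + v ^ 2) ^ (α + β) * v ^ (-2 * α - 1))) := by
  have hsum : s * v + s ^ 2 / (s * v) = s * (1 + v ^ 2) / v := by
    field_simp; ring
  rw [eulerKernel, hsum]
  refine Real.log_injOn_pos (mem_Ioi.2 (by positivity)) (mem_Ioi.2 (by positivity)) ?_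
  simp (disch := positivity) only [Real.log_mul, Real.log_rpow, Real.log_inv, Real.log_div,
    Real.log_pow]
  push_cast
  ring

theorem lintegral_Ioi_prod_comp_mul {h : ℝ × ℝ → ENNReal} (hh : Measurable h) :
    ∫⁻ p in Ioi (0:ℝ) ×ˢ Ioi (0:ℝ), h (p.1, p.1 * p.2) =
      ∫⁻ u in Ioi 0, ∫⁻ A in Ioi 0, ENNReal.ofReal A⁻¹ * h (A, u) := by
  have hshear : Measurable fun p : ℝ × ℝ => h (p.1, p.1 * p.2) := by fun_prop
  have hswap : Measurable (Function.uncurry fun A u => ENNReal.ofReal A⁻¹ * h (A, u)) := by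
    fun_prop
  rw [Measure.volume_eq_prod, ← Measure.prod_restrict, lintegral_prod _ hshear.aemeasurable,
    ← lintegral_lintegral_swap hswap.aemeasurable]
  refine setLIntegral_congr_fun measurableSet_Ioi fun A hA => ?_
  rw [lintegral_Ioi_comp_const_mul hA fun u => h (A, u),
    lintegral_const_mul' _ _ ENNReal.ofReal_ne_top]

theorem lintegral_Ioi_eulerKernel (α β : ℝ) {u : ℝ} (hu : 0 < u) :
    ∫⁻ A in Ioi 0, ENNReal.ofReal (eulerKernel α β u A) =
      ENNReal.ofReal (u ^ β) *
        ∫⁻ v in Ioi 0, ENNReal.ofReal ((1 + v ^ 2) ^ (α + β) * v ^ (-2 * α - 1)) := by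
  have hs : 0 < √u := Real.sqrt_pos.2 hu
  have hsubst := lintegral_Ioi_comp_const_mul hs fun A => ENNReal.ofReal (eulerKernel α β u A)
  have hpointwise : ∀ v ∈ Ioi (0:ℝ),
      ENNReal.ofReal (eulerKernel α β u (√u * v)) =
        ENNReal.ofReal (√u)⁻¹ *
          (ENNReal.ofReal (u ^ β) * ENNReal.ofReal ((1 + v ^ 2) ^ (α + β) * v ^ (-2 * α - 1))) := by
    intro v (hv : 0 < v)
    have key := eulerKernel_sq_mul α β hs hv
    rw [Real.sq_sqrt hu.le] at key
    rw [key, ENNReal.ofReal_mul (by positivity), ENNReal.ofReal_mul (by positivity)]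
  rw [setLIntegral_congr_fun measurableSet_Ioi hpointwise,
    lintegral_const_mul' _ _ ENNReal.ofReal_ne_top,
    lintegral_const_mul' _ _ ENNReal.ofReal_ne_top] at hsubst
  exact (ENNReal.mul_right_inj (ENNReal.ofReal_pos.2 (inv_pos.2 hs)).ne'
    ENNReal.ofReal_ne_top).1 hsubst.symm

theorem apply_eq_rpow_mul_apply_one_mul {φ : ℝ × ℝ → ENNReal} {γ : ℝ}
    (hhom : ∀ q A B : ℝ, 0 < q → 0 < A → 0 < B →
      φ (q * A, B / q) = ENNReal.ofReal (q ^ γ) * φ (A, B))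
    {A B : ℝ} (hA : 0 < A) (hB : 0 < B) :
    φ (A, B) = ENNReal.ofReal (A ^ γ) * φ (1, A * B) := by
  simpa [mul_div_cancel_left₀ _ hA.ne'] using hhom A 1 (A * B) hA one_pos (by positivity)

/-- Section 2.4: for a measurable `φ : (0,∞)² → [0,∞]` with the homogeneity
`φ(qA, B/q) = q^{β-α} φ(A,B)`, one has
`∫∫ (A+B)^{α+β} φ(A,B) dA dB = (∫ u^β φ(1,u) du) · (∫ (1+v²)^{α+β} v^{-2α-1} dv)`. -/
theorem euler_integral_factorization (α β : ℝ) (φ : ℝ × ℝ → ENNReal)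
    (hφ : Measurable φ)
    (hhom : ∀ q A B : ℝ, 0 < q → 0 < A → 0 < B →
      φ (q * A, B / q) = ENNReal.ofReal (q ^ (β - α)) * φ (A, B)) :
    ∫⁻ p in (Set.Ioi (0:ℝ) ×ˢ Set.Ioi (0:ℝ)),
        ENNReal.ofReal ((p.1 + p.2) ^ (α + β)) * φ p =
      (∫⁻ u in Set.Ioi (0:ℝ), ENNReal.ofReal (u ^ β) * φ (1, u)) *
        ∫⁻ v in Set.Ioi (0:ℝ), ENNReal.ofReal ((1 + v ^ 2) ^ (α + β) * v ^ (-2 * α - 1)) := by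
  set h : ℝ × ℝ → ENNReal := fun p =>
    ENNReal.ofReal ((p.1 + p.2 / p.1) ^ (α + β) * p.1 ^ (β - α)) * φ (1, p.2)
  have hsheared : ∀ p ∈ Ioi (0:ℝ) ×ˢ Ioi (0:ℝ),
      ENNReal.ofReal ((p.1 + p.2) ^ (α + β)) * φ p = h (p.1, p.1 * p.2) := by
    rintro ⟨A, B⟩ ⟨hA : 0 < A, hB : 0 < B⟩
    simp only [h, apply_eq_rpow_mul_apply_one_mul hhom hA hB, mul_div_cancel_left₀ _ hA.ne']
    rw [ENNReal.ofReal_mul (by positivity), mul_assoc]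
  have hinner : ∀ u ∈ Ioi (0:ℝ), ∫⁻ A in Ioi 0, ENNReal.ofReal A⁻¹ * h (A, u) =
      ENNReal.ofReal (u ^ β) * φ (1, u) *
        ∫⁻ v in Ioi 0, ENNReal.ofReal ((1 + v ^ 2) ^ (α + β) * v ^ (-2 * α - 1)) := by
    intro u (hu : 0 < u)
    have hcollect : ∀ A ∈ Ioi (0:ℝ), ENNReal.ofReal A⁻¹ * h (A, u) =
        ENNReal.ofReal (eulerKernel α β u A) * φ (1, u) := by
      intro A (hA : 0 < A)
      rw [eulerKernel, ← mul_assoc, ← ENNReal.ofReal_mul (by positivity)]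
    rw [setLIntegral_congr_fun measurableSet_Ioi hcollect,
      lintegral_mul_const _ (by unfold eulerKernel; fun_prop),
      lintegral_Ioi_eulerKernel α β hu, mul_right_comm]
  rw [setLIntegral_congr_fun (measurableSet_Ioi.prod measurableSet_Ioi) hsheared,
    lintegral_Ioi_prod_comp_mul (by fun_prop), setLIntegral_congr_fun measurableSet_Ioi hinner,
    lintegral_mul_const _ (by fun_prop)]
end
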